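/- arXiv:1604.07117 — 4 statements merged into one kernel-verified Lean document; each statement's English description precedes it below -/
import Mathlib

section
/- For n ≥ 3 with p = (n+2)/(n-2), one has -p ∫_{ℝⁿ} U^{p-1} Z_{n+1} dy = ((n-2)/2) ∫_{ℝⁿ} U^p dy, where Z_{n+1} = ((n-2)/2) U + ∇U·y. -/
/-!
With `t = 1 + ‖y‖²` and `a = (n - 2) / 2` we have `U = c t^(-a)`, and `Z = a U + ⟪∇U, y⟫`
(the generator of the dilations `λ^a U(λ y)`) equals `a c (2 t^(-(a+1)) - t^(-a))`. Since
`a (p - 1) = 2`, both sides become combinations of `I s = ∫ t^(-s)`, and the identity reduces to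
the recursion `2 s I (s + 1) = (2 s - n) I s`. In polar coordinates this is the vanishing of
`∫₀^∞ d/dr [r^n (1 + r²)^(-s)] dr`, valid as long as `n < 2 s`.
-/

open MeasureTheory Real Set Filter Topology
open scoped RealInnerProductSpace

lemma pow_mul_one_add_sq_rpow_neg_le {r s : ℝ} (hr : 0 < r) (hs : 0 ≤ s) (k : ℕ) :
    r ^ k * (1 + r ^ 2) ^ (-s) ≤ r ^ ((k : ℝ) - 2 * s) := by
  calc r ^ k * (1 + r ^ 2) ^ (-s) ≤ r ^ k * (r ^ 2) ^ (-s) :=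
        mul_le_mul_of_nonneg_left
          (rpow_le_rpow_of_nonpos (by positivity) (by linarith) (by linarith)) (by positivity)
    _ = r ^ ((k : ℝ) - 2 * s) := by
        rw [← rpow_natCast, ← rpow_natCast r 2, ← rpow_mul hr.le, sub_eq_add_neg, rpow_add hr]
        push_cast; ring_nf

lemma tendsto_pow_mul_one_add_sq_rpow_neg_atTop {s : ℝ} {k : ℕ} (hk : (k : ℝ) < 2 * s) :
    Tendsto (fun r : ℝ => r ^ k * (1 + r ^ 2) ^ (-s)) atTop (𝓝 0) := by
  have hs : 0 ≤ s := by linarith [k.cast_nonneg (α := ℝ)]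
  refine squeeze_zero' ?_ ?_
    ((tendsto_rpow_neg_atTop (y := 2 * s - k) (by linarith)).congr fun r => by rw [neg_sub])
  · filter_upwards [eventually_ge_atTop 0] with r hr
    positivity
  · filter_upwards [eventually_gt_atTop 0] with r hr
    exact pow_mul_one_add_sq_rpow_neg_le hr hs k

lemma hasDerivAt_pow_succ_mul_one_add_sq_rpow_neg (m : ℕ) (s r : ℝ) :
    HasDerivAt (fun r : ℝ => r ^ (m + 1) * (1 + r ^ 2) ^ (-s))
      (((m : ℝ) + 1 - 2 * s) * (r ^ m * (1 + r ^ 2) ^ (-s))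
        + 2 * s * (r ^ m * (1 + r ^ 2) ^ (-(s + 1)))) r := by
  have ht : 0 < 1 + r ^ 2 := by positivity
  have hbase : HasDerivAt (fun r : ℝ => 1 + r ^ 2) (2 * r) r := by
    simpa using (hasDerivAt_pow 2 r).const_add 1
  refine ((hasDerivAt_pow (m + 1) r).mul
    (hbase.rpow_const (p := -s) (Or.inl ht.ne'))).congr_deriv ?_
  have hsplit : (1 + r ^ 2) ^ (-s) = (1 + r ^ 2) * (1 + r ^ 2) ^ (-(s + 1)) := by
    rw [show -s = 1 + -(s + 1) by ring, rpow_add ht, rpow_one]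
  rw [show -s - 1 = -(s + 1) by ring, hsplit]
  push_cast
  ring

lemma two_mul_integral_pow_mul_one_add_sq_rpow_neg_add_one {m : ℕ} {s : ℝ}
    (hs : (m : ℝ) + 1 < 2 * s)
    (hI : IntegrableOn (fun r : ℝ => r ^ m * (1 + r ^ 2) ^ (-s)) (Ioi 0))
    (hI' : IntegrableOn (fun r : ℝ => r ^ m * (1 + r ^ 2) ^ (-(s + 1))) (Ioi 0)) :
    2 * s * ∫ r in Ioi (0 : ℝ), r ^ m * (1 + r ^ 2) ^ (-(s + 1)) =
      (2 * s - (m + 1)) * ∫ r in Ioi (0 : ℝ), r ^ m * (1 + r ^ 2) ^ (-s) := by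
  have hFTC := integral_Ioi_of_hasDerivAt_of_tendsto'
    (fun r _ => hasDerivAt_pow_succ_mul_one_add_sq_rpow_neg m s r)
    ((hI.const_mul _).add (hI'.const_mul _))
    (tendsto_pow_mul_one_add_sq_rpow_neg_atTop (k := m + 1) (by push_cast; exact hs))
  rw [integral_add (hI.const_mul _) (hI'.const_mul _), integral_const_mul, integral_const_mul,
    zero_pow m.succ_ne_zero, zero_mul, sub_zero] at hFTC
  linarith

section HaarMeasure

variable {E : Type*} [NormedAddCommGroup E] [NormedSpace ℝ E] [FiniteDimensional ℝ E]
  [MeasurableSpace E] [BorelSpace E] (μ : Measure E) [μ.IsAddHaarMeasure]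

lemma integrable_one_add_norm_sq_rpow_neg {s : ℝ} (hs : (Module.finrank ℝ E : ℝ) < 2 * s) :
    Integrable (fun x : E => (1 + ‖x‖ ^ 2) ^ (-s)) μ := by
  simpa [neg_div] using integrable_rpow_neg_one_add_norm_sq (μ := μ) hs

theorem two_mul_integral_one_add_norm_sq_rpow_neg_add_one [Nontrivial E] {s : ℝ}
    (hs : (Module.finrank ℝ E : ℝ) < 2 * s) :
    2 * s * ∫ x, (1 + ‖x‖ ^ 2) ^ (-(s + 1)) ∂μ =
      (2 * s - Module.finrank ℝ E) * ∫ x, (1 + ‖x‖ ^ 2) ^ (-s) ∂μ := by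
  obtain ⟨m, hm⟩ := Nat.exists_eq_succ_of_ne_zero (Module.finrank_pos (R := ℝ) (M := E)).ne'
  have hint : ∀ t : ℝ, (Module.finrank ℝ E : ℝ) < 2 * t →
      IntegrableOn (fun r : ℝ => r ^ m * (1 + r ^ 2) ^ (-t)) (Ioi 0) := fun t ht => by
    simpa [hm] using (integrable_fun_norm_addHaar μ (f := fun r => (1 + r ^ 2) ^ (-t))).1
      (integrable_one_add_norm_sq_rpow_neg μ ht)
  rw [integral_fun_norm_addHaar μ (fun r => (1 + r ^ 2) ^ (-(s + 1))),
    integral_fun_norm_addHaar μ (fun r => (1 + r ^ 2) ^ (-s))]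
  have hrad := two_mul_integral_pow_mul_one_add_sq_rpow_neg_add_one
    (by rw [hm] at hs; push_cast at hs; exact hs) (hint s hs) (hint (s + 1) (by linarith))
  simp only [hm, smul_eq_mul, nsmul_eq_mul]
  push_cast
  linear_combination ((m + 1) * μ.real (Metric.ball 0 1)) * hrad

end HaarMeasure

section Gradient

variable {E : Type*} [NormedAddCommGroup E] [InnerProductSpace ℝ E] [CompleteSpace E]

lemma hasGradientAt_const_mul_one_add_norm_sq_rpow (c α : ℝ) (y : E) :
    HasGradientAt (fun y : E => c * (1 + ‖y‖ ^ 2) ^ α)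
      ((2 * c * α * (1 + ‖y‖ ^ 2) ^ (α - 1)) • y) y := by
  have ht : 0 < 1 + ‖y‖ ^ 2 := by positivity
  have hbase : HasFDerivAt (fun y : E => 1 + ‖y‖ ^ 2) (2 • innerSL ℝ y) y :=
    (hasStrictFDerivAt_norm_sq y).hasFDerivAt.const_add 1
  rw [hasGradientAt_iff_hasFDerivAt]
  refine ((hbase.rpow_const (p := α) (Or.inl ht.ne')).const_mul c).congr_fderiv ?_
  ext v
  simp only [smul_apply, coe_innerSL_apply, nsmul_eq_mul, smul_eq_mul,
    map_smul, InnerProductSpace.toDual_apply_apply]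
  ring

lemma mul_add_inner_gradient_const_mul_one_add_norm_sq_rpow_neg (a c : ℝ) (y : E) :
    a * (c * (1 + ‖y‖ ^ 2) ^ (-a)) +
        ⟪gradient (fun y : E => c * (1 + ‖y‖ ^ 2) ^ (-a)) y, y⟫ =
      a * c * (2 * (1 + ‖y‖ ^ 2) ^ (-(a + 1)) - (1 + ‖y‖ ^ 2) ^ (-a)) := by
  have ht : 0 < 1 + ‖y‖ ^ 2 := by positivity
  have hstep : (1 + ‖y‖ ^ 2) ^ (-a) = (1 + ‖y‖ ^ 2) ^ (-(a + 1)) * (1 + ‖y‖ ^ 2) := by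
    rw [← rpow_add_one ht.ne']; ring_nf
  rw [(hasGradientAt_const_mul_one_add_norm_sq_rpow c (-a) y).gradient, real_inner_smul_left,
    real_inner_self_eq_norm_sq, show -a - 1 = -(a + 1) by ring, hstep]
  ring

end Gradient

theorem stmt5 (n : ℕ) (hn : 3 ≤ n)
    (p : ℝ) (hp : p = ((n : ℝ) + 2) / ((n : ℝ) - 2))
    (U : EuclideanSpace ℝ (Fin n) → ℝ)
    (hU : ∀ y, U y = ((n : ℝ) * ((n : ℝ) - 2)) ^ (((n : ℝ) - 2) / 4) *
      (1 + ‖y‖ ^ 2) ^ (-(((n : ℝ) - 2) / 2)))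
    (Z : EuclideanSpace ℝ (Fin n) → ℝ)
    (hZ : ∀ y, Z y = (((n : ℝ) - 2) / 2) * U y + ⟪gradient U y, y⟫) :
    -p * ∫ y, (U y) ^ (p - 1) * Z y =
      (((n : ℝ) - 2) / 2) * ∫ y, (U y) ^ p := by
  have hn3 : (3 : ℝ) ≤ n := by exact_mod_cast hn
  have hn2 : (n : ℝ) - 2 ≠ 0 := by linarith
  have : NeZero n := ⟨by omega⟩
  set a : ℝ := ((n : ℝ) - 2) / 2 with ha
  set s : ℝ := ((n : ℝ) + 2) / 2 with hs
  set c : ℝ := ((n : ℝ) * ((n : ℝ) - 2)) ^ (((n : ℝ) - 2) / 4)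
  have hc : 0 < c := rpow_pos_of_pos (by nlinarith) _
  have hUq (q : ℝ) (y : EuclideanSpace ℝ (Fin n)) :
      U y ^ q = c ^ q * (1 + ‖y‖ ^ 2) ^ (-(a * q)) := by
    have ht : 0 ≤ 1 + ‖y‖ ^ 2 := by positivity
    rw [hU y, mul_rpow hc.le (rpow_nonneg ht _), ← rpow_mul ht, neg_mul]
  have hUp (y : EuclideanSpace ℝ (Fin n)) : U y ^ p = c ^ p * (1 + ‖y‖ ^ 2) ^ (-s) := by
    rw [hUq, hp, ha, hs]; congr 3; field_simp
  have hZy (y : EuclideanSpace ℝ (Fin n)) :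
      Z y = a * c * (2 * (1 + ‖y‖ ^ 2) ^ (-(a + 1)) - (1 + ‖y‖ ^ 2) ^ (-a)) := by
    rw [hZ, show U = fun y => c * (1 + ‖y‖ ^ 2) ^ (-a) from funext hU,
      mul_add_inner_gradient_const_mul_one_add_norm_sq_rpow_neg]
  have hintegrand (y : EuclideanSpace ℝ (Fin n)) :
      U y ^ (p - 1) * Z y =
        a * c ^ p * (2 * (1 + ‖y‖ ^ 2) ^ (-(s + 1)) - (1 + ‖y‖ ^ 2) ^ (-s)) := by
    have ht : 0 < 1 + ‖y‖ ^ 2 := by positivity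
    have hexp : a * (p - 1) = 2 := by rw [hp, ha]; field_simp; ring
    rw [hUq, hZy, hexp, show -(s + 1) = -2 + -(a + 1) by rw [hs, ha]; ring,
      show -s = -2 + -a by rw [hs, ha]; ring, rpow_add ht, rpow_add ht, rpow_sub_one hc.ne']
    field_simp
  have hdim : (Module.finrank ℝ (EuclideanSpace ℝ (Fin n)) : ℝ) < 2 * s := by
    rw [finrank_euclideanSpace_fin, hs]; linarith
  have hrec := two_mul_integral_one_add_norm_sq_rpow_neg_add_one volume hdim
  rw [finrank_euclideanSpace_fin, show 2 * s = n + 2 by rw [hs]; ring] at hrec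
  simp_rw [hintegrand, hUp]
  rw [integral_const_mul, integral_sub ((integrable_one_add_norm_sq_rpow_neg volume
    (by linarith)).const_mul 2) (integrable_one_add_norm_sq_rpow_neg volume hdim),
    integral_const_mul, integral_const_mul, hp]
  field_simp
  linear_combination (-2 * a) * hrec
end

section
/- Let ν > 0 and suppose c(s) is continuous with |c(s)| ≤ C s^{-ν} for s ≥ τ₀ > 0 and some C > 0, and let λ₀ > 0. Then e(τ) = ∫_τ^∞ exp(√λ₀(τ-s)) c(s) ds satisfies |e(τ)| ≤ C' τ^{-ν} for all τ ≥ τ₀, for some constant C' depending only on λ₀, ν. -/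
open MeasureTheory

lemma exp_int (k τ : ℝ) (hk : 0 < k) :
    ∫ s in Set.Ioi τ, Real.exp (k * (τ - s)) = 1 / k := by
  have h1 : ∀ s : ℝ, Real.exp (k * (τ - s)) = Real.exp (k * τ) * Real.exp (-(k * s)) := by
    intro s; rw [← Real.exp_add]; ring_nf
  calc ∫ s in Set.Ioi τ, Real.exp (k * (τ - s))
      = ∫ s in Set.Ioi τ, Real.exp (k * τ) * Real.exp (-(k * s)) := by
        exact setIntegral_congr_fun measurableSet_Ioi (fun s _ => h1 s)
    _ = Real.exp (k * τ) * ∫ s in Set.Ioi τ, Real.exp (-(k * s)) := by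
        rw [integral_const_mul]
    _ = 1 / k := by
        have := integral_comp_mul_left_Ioi (fun x => Real.exp (-x)) τ hk
        simp only [smul_eq_mul] at this
        rw [show (fun s : ℝ => Real.exp (-(k*s))) = (fun s : ℝ => Real.exp (-(k*s))) from rfl,
          show (∫ s in Set.Ioi τ, Real.exp (-(k * s))) = k⁻¹ * ∫ x in Set.Ioi (k*τ), Real.exp (-x) from this,
          integral_exp_neg_Ioi]
        rw [← mul_assoc, mul_comm (Real.exp (k*τ)) k⁻¹, mul_assoc, ← Real.exp_add]
        simp [one_div]

theorem stmt10 (lam0 ν τ₀ C : ℝ) (hlam0 : 0 < lam0) (hν : 0 < ν) (hτ₀ : 0 < τ₀)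
    (hC : 0 < C)
    (c : ℝ → ℝ) (hc : ContinuousOn c (Set.Ici τ₀))
    (hbound : ∀ s ≥ τ₀, |c s| ≤ C * s ^ (-ν))
    (e : ℝ → ℝ)
    (he : ∀ τ, e τ = ∫ s in Set.Ioi τ, Real.exp (Real.sqrt lam0 * (τ - s)) * c s) :
    ∃ C' : ℝ, 0 < C' ∧ ∀ τ ≥ τ₀, |e τ| ≤ C' * τ ^ (-ν) := by
  set k := Real.sqrt lam0 with hk
  have hkpos : 0 < k := Real.sqrt_pos.mpr hlam0
  refine ⟨C / k, div_pos hC hkpos, fun τ hτ => ?_⟩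
  have hτpos : 0 < τ := lt_of_lt_of_le hτ₀ hτ
  -- dominating function
  set g : ℝ → ℝ := fun s => Real.exp (k * (τ - s)) * (C * τ ^ (-ν)) with hg
  have hgi : IntegrableOn g (Set.Ioi τ) := by
    have : IntegrableOn (fun s => Real.exp (-(k * s))) (Set.Ioi τ) := by
      have := exp_neg_integrableOn_Ioi τ hkpos
      simpa [neg_mul] using this
    have h2 : IntegrableOn (fun s => Real.exp (k * τ) * (C * τ ^ (-ν)) * Real.exp (-(k * s)))
        (Set.Ioi τ) := this.const_mul _
    refine h2.congr_fun (fun s _ => ?_) measurableSet_Ioi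
    simp only [g, mul_sub, Real.exp_sub, Real.exp_neg]
    field_simp
  have hbd : ∀ᵐ s ∂(volume.restrict (Set.Ioi τ)),
      ‖Real.exp (k * (τ - s)) * c s‖ ≤ g s := by
    rw [ae_restrict_iff' measurableSet_Ioi]
    filter_upwards with s hs
    have hsτ : τ < s := hs
    have hs0 : τ₀ ≤ s := le_of_lt (lt_of_le_of_lt hτ hsτ)
    have h1 : |c s| ≤ C * s ^ (-ν) := hbound s hs0
    have h2 : s ^ (-ν) ≤ τ ^ (-ν) :=
      Real.rpow_le_rpow_of_nonpos hτpos hsτ.le (neg_nonpos.mpr hν.le)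
    rw [Real.norm_eq_abs, abs_mul, Real.abs_exp]
    calc Real.exp (k * (τ - s)) * |c s| ≤ Real.exp (k * (τ - s)) * (C * s ^ (-ν)) := by
          exact mul_le_mul_of_nonneg_left h1 (Real.exp_nonneg _)
      _ ≤ g s := by
          apply mul_le_mul_of_nonneg_left _ (Real.exp_nonneg _)
          exact mul_le_mul_of_nonneg_left h2 hC.le
  have hmain : |e τ| ≤ ∫ s in Set.Ioi τ, g s := by
    rw [he τ, ← Real.norm_eq_abs]
    exact norm_integral_le_of_norm_le hgi hbd
  have hgint : ∫ s in Set.Ioi τ, g s = C / k * τ ^ (-ν) := by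
    rw [hg]
    rw [integral_mul_const, exp_int k τ hkpos]
    ring
  rw [hgint] at hmain
  exact hmain
end

section
/- Let n ≥ 5 and 0 < a < 3, and let g be the solution on (0,2R) of g'' + ((n-1)/r) g' + 1/(1+r^a) = 0 given by the variation-of-parameters formula g(r) = ∫_r^{2R} ρ^{1-n} ∫_0^ρ s^{n-1}/(1+s^a) ds dρ (the case of potential identically zero). Then g ≥ 0, g'(0⁺) = 0, g(2R) = 0, and g(0) is bounded by C·(1 if a > 2; log R if a = 2; R^{2-a} if a < 2) for a constant C independent of R ≥ 2. -/
/-!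
Write `g R r = ∫_r^{2R} H` with `H ρ = ρ^{1-n} ∫_0^ρ s^{n-1}/(1+s^a) ds`. Bounding the inner integrand
by `s^{n-1}` gives `0 ≤ H ρ ≤ ρ/n`, so `H` vanishes at the origin, which yields `g'(0⁺) = -H(0⁺) = 0`.
For `ρ ≥ 1` the bound `s^{n-1-a}` on `[1, ρ]` gives `H ρ ≤ ρ^{1-n}/n + ρ^{1-a}/(n-a)`, so `g R 0`
is at most a constant plus a multiple of `∫_1^{2R} ρ^{1-a} dρ`, which is bounded, `log (2R)` or `(2R)^{2-a}/(2-a)`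
according as `a > 2`, `a = 2` or `a < 2`.
-/

open MeasureTheory intervalIntegral Set Filter Topology

namespace RadialPoisson

noncomputable def density (d a s : ℝ) : ℝ := s ^ (d - 1) / (1 + s ^ a)

noncomputable def enclosedMass (d a ρ : ℝ) : ℝ := ∫ s in (0 : ℝ)..ρ, density d a s

/-- `-∂ᵣ g` for the solution `g r = ∫_r^{2R} flux`. -/
noncomputable def flux (d a ρ : ℝ) : ℝ := ρ ^ (1 - d) * enclosedMass d a ρ

noncomputable def growthBound (a R : ℝ) : ℝ :=
  if 2 < a then 1 else if a = 2 then Real.log R else R ^ (2 - a)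

variable {d a p R T r ρ s : ℝ}

lemma one_add_rpow_pos (a : ℝ) (hs : 0 ≤ s) : 0 < 1 + s ^ a := by
  have := Real.rpow_nonneg hs a
  linarith

lemma density_nonneg (hs : 0 ≤ s) : 0 ≤ density d a s :=
  div_nonneg (Real.rpow_nonneg hs _) (one_add_rpow_pos a hs).le

lemma density_le_rpow (hs : 0 ≤ s) : density d a s ≤ s ^ (d - 1) :=
  div_le_self (Real.rpow_nonneg hs _) (le_add_of_nonneg_right (Real.rpow_nonneg hs a))

lemma density_le_rpow_sub (hs : 0 < s) : density d a s ≤ s ^ (d - 1 - a) := by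
  rw [density, Real.rpow_sub hs (d - 1) a]
  exact div_le_div_of_nonneg_left (Real.rpow_nonneg hs.le _) (Real.rpow_pos_of_pos hs a)
    (le_add_of_nonneg_left zero_le_one)

lemma continuousOn_density (hd : 1 ≤ d) (ha : 0 ≤ a) : ContinuousOn (density d a) (Ici 0) :=
  ContinuousOn.div
    (fun x _ ↦ (Real.continuousAt_rpow_const x _ (Or.inr (by linarith))).continuousWithinAt)
    (fun x _ ↦ (continuousAt_const.add
      (Real.continuousAt_rpow_const x _ (Or.inr ha))).continuousWithinAt)
    (fun _ hx ↦ (one_add_rpow_pos a hx).ne')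

lemma intervalIntegrable_rpow_of_one_le {p T₁ T₂ : ℝ} (h₁ : 1 ≤ T₁) (h₂ : 1 ≤ T₂) :
    IntervalIntegrable (fun x : ℝ ↦ x ^ p) volume T₁ T₂ :=
  ContinuousOn.intervalIntegrable fun x hx ↦
    (Real.continuousAt_rpow_const x p
      (Or.inl (by linarith [le_min h₁ h₂, hx.1]))).continuousWithinAt

lemma intervalIntegrable_of_continuousOn_Ici {f : ℝ → ℝ} (hf : ContinuousOn f (Ici 0))
    ⦃T₁ T₂ : ℝ⦄ (h₁ : 0 ≤ T₁) (h₂ : 0 ≤ T₂) : IntervalIntegrable f volume T₁ T₂ :=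
  (hf.mono fun _ hx ↦ (le_min h₁ h₂).trans hx.1).intervalIntegrable

lemma integral_one_rpow_le_of_lt_neg_one (hp : p < -1) (hT : 1 ≤ T) :
    ∫ x in (1 : ℝ)..T, x ^ p ≤ 1 / (-1 - p) := by
  have h0 : (0 : ℝ) ∉ uIcc 1 T := by
    rw [uIcc_of_le hT]
    exact fun h ↦ by linarith [h.1]
  rw [integral_rpow (Or.inr ⟨by linarith, h0⟩), Real.one_rpow,
    show 1 / (-1 - p) = -1 / (p + 1) by rw [← neg_div_neg_eq]; ring_nf]
  exact div_le_div_of_nonpos_of_le (by linarith)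
    (by linarith [Real.rpow_nonneg (zero_le_one.trans hT) (p + 1)])

lemma integral_one_rpow_le_of_neg_one_lt (hp : -1 < p) :
    ∫ x in (1 : ℝ)..T, x ^ p ≤ T ^ (p + 1) / (p + 1) := by
  rw [integral_rpow (Or.inl hp), Real.one_rpow]
  gcongr
  · linarith
  · linarith

lemma enclosedMass_nonneg (hρ : 0 ≤ ρ) : 0 ≤ enclosedMass d a ρ :=
  integral_nonneg hρ fun _ hs ↦ density_nonneg hs.1

lemma enclosedMass_le (hd : 1 ≤ d) (ha : 0 ≤ a) (hρ : 0 ≤ ρ) :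
    enclosedMass d a ρ ≤ ρ ^ d / d := by
  calc enclosedMass d a ρ ≤ ∫ s in (0 : ℝ)..ρ, s ^ (d - 1) :=
        integral_mono_on hρ
          (intervalIntegrable_of_continuousOn_Ici (continuousOn_density hd ha) le_rfl hρ)
          (intervalIntegral.intervalIntegrable_rpow' (by linarith))
          fun s hs ↦ density_le_rpow hs.1
    _ = ρ ^ d / d := by
        rw [integral_rpow (Or.inl (by linarith)), Real.zero_rpow (by linarith), sub_add_cancel,
          sub_zero]

lemma enclosedMass_le_of_one_le (hd : 1 ≤ d) (ha : 0 ≤ a) (had : a < d) (hρ : 1 ≤ ρ) :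
    enclosedMass d a ρ ≤ 1 / d + ρ ^ (d - a) / (d - a) := by
  have hint := intervalIntegrable_of_continuousOn_Ici (continuousOn_density hd ha)
  have hmass_one : enclosedMass d a 1 ≤ 1 / d := by
    simpa using enclosedMass_le hd ha (ρ := 1) zero_le_one
  have htail : ∫ s in (1 : ℝ)..ρ, density d a s ≤ ρ ^ (d - a) / (d - a) :=
    calc ∫ s in (1 : ℝ)..ρ, density d a s ≤ ∫ s in (1 : ℝ)..ρ, s ^ (d - 1 - a) :=
          integral_mono_on hρ (hint zero_le_one (by linarith))
            (intervalIntegrable_rpow_of_one_le le_rfl hρ)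
            fun s hs ↦ density_le_rpow_sub (by linarith [hs.1])
      _ ≤ ρ ^ (d - 1 - a + 1) / (d - 1 - a + 1) :=
          integral_one_rpow_le_of_neg_one_lt (by linarith)
      _ = ρ ^ (d - a) / (d - a) := by ring_nf
  rw [enclosedMass, ← integral_add_adjacent_intervals (hint le_rfl zero_le_one)
    (hint zero_le_one (by linarith))]
  exact add_le_add hmass_one htail

lemma flux_zero : flux d a 0 = 0 := by
  simp [flux, enclosedMass]

lemma flux_nonneg (hρ : 0 ≤ ρ) : 0 ≤ flux d a ρ :=
  mul_nonneg (Real.rpow_nonneg hρ _) (enclosedMass_nonneg hρ)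

lemma flux_le (hd : 1 ≤ d) (ha : 0 ≤ a) (hρ : 0 ≤ ρ) : flux d a ρ ≤ ρ / d := by
  rcases hρ.eq_or_lt with rfl | hρ
  · simp [flux_zero]
  calc flux d a ρ ≤ ρ ^ (1 - d) * (ρ ^ d / d) :=
        mul_le_mul_of_nonneg_left (enclosedMass_le hd ha hρ.le) (Real.rpow_nonneg hρ.le _)
    _ = ρ / d := by
        rw [mul_div_assoc', ← Real.rpow_add hρ, sub_add_cancel, Real.rpow_one]

lemma flux_le_of_one_le (hd : 1 ≤ d) (ha : 0 ≤ a) (had : a < d) (hρ : 1 ≤ ρ) :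
    flux d a ρ ≤ ρ ^ (1 - d) / d + ρ ^ (1 - a) / (d - a) := by
  have hρ0 : 0 < ρ := by linarith
  calc flux d a ρ ≤ ρ ^ (1 - d) * (1 / d + ρ ^ (d - a) / (d - a)) :=
        mul_le_mul_of_nonneg_left (enclosedMass_le_of_one_le hd ha had hρ)
          (Real.rpow_nonneg hρ0.le _)
    _ = ρ ^ (1 - d) / d + ρ ^ (1 - a) / (d - a) := by
        rw [mul_add, mul_one_div, ← mul_div_assoc, ← Real.rpow_add hρ0]
        ring_nf

lemma tendsto_flux_nhdsGE_zero (hd : 1 ≤ d) (ha : 0 ≤ a) :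
    Tendsto (flux d a) (𝓝[≥] 0) (𝓝 0) := by
  refine squeeze_zero' (eventually_nhdsWithin_of_forall fun _ hρ ↦ flux_nonneg hρ)
    (eventually_nhdsWithin_of_forall fun _ hρ ↦ flux_le hd ha hρ) ?_
  simpa using ((continuous_id.div_const d).tendsto 0).mono_left nhdsWithin_le_nhds

lemma continuousAt_enclosedMass (hd : 1 ≤ d) (ha : 0 ≤ a) (hρ : 0 < ρ) :
    ContinuousAt (enclosedMass d a) ρ := by
  have hint : IntervalIntegrable (density d a) volume 0 (ρ + 1) :=
    intervalIntegrable_of_continuousOn_Ici (continuousOn_density hd ha) le_rfl (by linarith)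
  have hc := continuousOn_primitive_interval' hint left_mem_uIcc
  rw [uIcc_of_le (by linarith)] at hc
  exact hc.continuousAt (Icc_mem_nhds hρ (by linarith))

lemma continuousOn_flux (hd : 1 ≤ d) (ha : 0 ≤ a) : ContinuousOn (flux d a) (Ici 0) := by
  intro ρ hρ
  rcases (show (0 : ℝ) ≤ ρ from hρ).eq_or_lt with rfl | hρ
  · rw [ContinuousWithinAt, flux_zero]
    exact tendsto_flux_nhdsGE_zero hd ha
  · exact ((Real.continuousAt_rpow_const ρ _ (Or.inl hρ.ne')).mul
      (continuousAt_enclosedMass hd ha hρ)).continuousWithinAt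

lemma integral_flux_nonneg (hr : 0 ≤ r) (hrT : r ≤ T) : 0 ≤ ∫ ρ in r..T, flux d a ρ :=
  integral_nonneg hrT fun _ hρ ↦ flux_nonneg (hr.trans hρ.1)

lemma hasDerivAt_integral_flux (hd : 1 ≤ d) (ha : 0 ≤ a) (hr : 0 < r) (hT : 0 ≤ T) :
    HasDerivAt (fun u ↦ ∫ ρ in u..T, flux d a ρ) (-flux d a r) r := by
  have hcont := continuousOn_flux hd ha
  exact integral_hasDerivAt_left (intervalIntegrable_of_continuousOn_Ici hcont hr.le hT)
    ((hcont.mono Ioi_subset_Ici_self).stronglyMeasurableAtFilter isOpen_Ioi r hr)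
    (hcont.continuousAt (Ici_mem_nhds hr))

lemma tendsto_deriv_integral_flux (hd : 1 ≤ d) (ha : 0 ≤ a) (hT : 0 ≤ T) :
    Tendsto (deriv fun u ↦ ∫ ρ in u..T, flux d a ρ) (𝓝[>] 0) (𝓝 0) := by
  have hflux : Tendsto (fun r ↦ -flux d a r) (𝓝[>] 0) (𝓝 0) := by
    simpa using ((tendsto_flux_nhdsGE_zero hd ha).mono_left
      (nhdsWithin_mono 0 Ioi_subset_Ici_self)).neg
  refine hflux.congr' (eventually_nhdsWithin_of_forall fun r hr ↦ ?_)
  exact (hasDerivAt_integral_flux hd ha hr hT).deriv.symm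

lemma integral_flux_le (hd : 2 < d) (ha : 0 ≤ a) (had : a < d) (hT : 1 ≤ T) :
    ∫ ρ in (0 : ℝ)..T, flux d a ρ ≤
      1 / (2 * d) + 1 / (d * (d - 2)) + (∫ ρ in (1 : ℝ)..T, ρ ^ (1 - a)) / (d - a) := by
  have hint := intervalIntegrable_of_continuousOn_Ici (continuousOn_flux (d := d) (by linarith) ha)
  have hnear : ∫ ρ in (0 : ℝ)..1, flux d a ρ ≤ 1 / (2 * d) :=
    calc ∫ ρ in (0 : ℝ)..1, flux d a ρ ≤ ∫ ρ in (0 : ℝ)..1, ρ / d :=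
          integral_mono_on zero_le_one (hint le_rfl zero_le_one)
            ((continuous_id.div_const d).intervalIntegrable _ _)
            fun ρ hρ ↦ flux_le (by linarith) ha hρ.1
      _ = 1 / (2 * d) := by
          rw [intervalIntegral.integral_div, integral_id]
          ring
  have hrpow {q : ℝ} := intervalIntegrable_rpow_of_one_le (p := q) le_rfl hT
  have hfar : ∫ ρ in (1 : ℝ)..T, flux d a ρ ≤
      1 / (d * (d - 2)) + (∫ ρ in (1 : ℝ)..T, ρ ^ (1 - a)) / (d - a) :=
    calc ∫ ρ in (1 : ℝ)..T, flux d a ρ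
        ≤ ∫ ρ in (1 : ℝ)..T, (ρ ^ (1 - d) / d + ρ ^ (1 - a) / (d - a)) :=
          integral_mono_on hT (hint zero_le_one (by linarith))
            ((hrpow.div_const _).add (hrpow.div_const _))
            fun ρ hρ ↦ flux_le_of_one_le (by linarith) ha had hρ.1
      _ = (∫ ρ in (1 : ℝ)..T, ρ ^ (1 - d)) / d + (∫ ρ in (1 : ℝ)..T, ρ ^ (1 - a)) / (d - a) := by
          rw [integral_add (hrpow.div_const _) (hrpow.div_const _), intervalIntegral.integral_div,
            intervalIntegral.integral_div]
      _ ≤ 1 / (-1 - (1 - d)) / d + (∫ ρ in (1 : ℝ)..T, ρ ^ (1 - a)) / (d - a) := by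
          gcongr
          exact integral_one_rpow_le_of_lt_neg_one (by linarith) hT
      _ = 1 / (d * (d - 2)) + (∫ ρ in (1 : ℝ)..T, ρ ^ (1 - a)) / (d - a) := by
          rw [div_div, show -1 - (1 - d) = d - 2 by ring, mul_comm]
  rw [← integral_add_adjacent_intervals (hint le_rfl zero_le_one)
    (hint zero_le_one (by linarith))]
  linarith

lemma log_two_le_growthBound (hR : 2 ≤ R) : Real.log 2 ≤ growthBound a R := by
  have hlog2 : Real.log 2 ≤ 1 := by
    linarith [Real.log_le_sub_one_of_pos (x := 2) (by norm_num)]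
  unfold growthBound
  split_ifs with h₁ h₂
  · exact hlog2
  · exact Real.log_le_log (by norm_num) hR
  · have ha : a < 2 := lt_of_le_of_ne (not_lt.mp h₁) h₂
    exact hlog2.trans (Real.one_le_rpow (by linarith) (by linarith))

lemma exists_integral_rpow_le_growthBound (a : ℝ) :
    ∃ K > 0, ∀ R ≥ 2, ∫ ρ in (1 : ℝ)..(2 * R), ρ ^ (1 - a) ≤ K * growthBound a R := by
  rcases lt_trichotomy a 2 with ha | rfl | ha
  · refine ⟨2 ^ (2 - a) / (2 - a), div_pos (by positivity) (by linarith), fun R hR ↦ ?_⟩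
    have hga : growthBound a R = R ^ (2 - a) := by simp [growthBound, ha.not_gt, ha.ne]
    calc ∫ ρ in (1 : ℝ)..(2 * R), ρ ^ (1 - a) ≤ (2 * R) ^ (1 - a + 1) / (1 - a + 1) :=
          integral_one_rpow_le_of_neg_one_lt (by linarith)
      _ = 2 ^ (2 - a) / (2 - a) * growthBound a R := by
          rw [hga, show 1 - a + 1 = 2 - a by ring, Real.mul_rpow (by norm_num) (by linarith)]
          ring
  · refine ⟨2, two_pos, fun R hR ↦ ?_⟩
    have h0 : (0 : ℝ) ∉ uIcc 1 (2 * R) := by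
      rw [uIcc_of_le (by linarith)]
      exact fun h ↦ by linarith [h.1]
    have hinv : ∀ ρ ∈ uIcc (1 : ℝ) (2 * R), ρ ^ ((1 : ℝ) - 2) = ρ⁻¹ := fun ρ _ ↦ by
      rw [show (1 : ℝ) - 2 = -1 by norm_num, Real.rpow_neg_one]
    rw [integral_congr hinv, integral_inv h0, div_one, Real.log_mul two_ne_zero (by linarith)]
    simp only [growthBound, lt_irrefl, if_false, if_true]
    linarith [Real.log_le_log (by norm_num) hR]
  · refine ⟨1 / (a - 2), by simpa using ha, fun R hR ↦ ?_⟩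
    simpa [growthBound, ha, show -1 - (1 - a) = a - 2 by ring] using
      integral_one_rpow_le_of_lt_neg_one (p := 1 - a) (by linarith) (show 1 ≤ 2 * R by linarith)

end RadialPoisson

open RadialPoisson in
theorem stmt14 (n : ℕ) (hn : 5 ≤ n) (a : ℝ) (ha0 : 0 < a) (ha3 : a < 3)
    (g : ℝ → ℝ → ℝ)
    (hg : ∀ R r : ℝ, g R r =
      ∫ ρ in r..(2 * R), ρ ^ ((1 : ℝ) - (n : ℝ)) *
        ∫ s in (0 : ℝ)..ρ, s ^ ((n : ℝ) - 1) / (1 + s ^ a)) :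
    ∃ C : ℝ, 0 < C ∧ ∀ R ≥ (2 : ℝ),
      (∀ r ∈ Set.Ioo (0 : ℝ) (2 * R), 0 ≤ g R r) ∧
      g R (2 * R) = 0 ∧
      Filter.Tendsto (deriv (g R)) (nhdsWithin 0 (Set.Ioi 0)) (nhds 0) ∧
      g R 0 ≤ C * (if 2 < a then 1 else if a = 2 then Real.log R else R ^ (2 - a)) := by
  have hn5 : (5 : ℝ) ≤ n := by exact_mod_cast hn
  obtain ⟨K, hK, hKbound⟩ := exists_integral_rpow_le_growthBound a
  set c := 1 / (2 * (n : ℝ)) + 1 / (n * (n - 2))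
  have hc_pos : 0 < c := by
    have : (0 : ℝ) < n - 2 := by linarith
    positivity
  have hna : (0 : ℝ) < n - a := by linarith
  have hlog2 : 0 < Real.log 2 := Real.log_pos one_lt_two
  refine ⟨c / Real.log 2 + K / (n - a), by positivity, fun R hR ↦ ?_⟩
  have hgR : g R = fun r ↦ ∫ ρ in r..(2 * R), flux n a ρ := funext (hg R)
  have hE := log_two_le_growthBound (a := a) hR
  refine ⟨fun r hr ↦ hgR ▸ integral_flux_nonneg hr.1.le hr.2.le, by simp [hgR],
    hgR ▸ tendsto_deriv_integral_flux (by linarith) ha0.le (by linarith), ?_⟩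
  calc g R 0 ≤ c + (∫ ρ in (1 : ℝ)..(2 * R), ρ ^ (1 - a)) / (n - a) := by
        rw [hgR]
        exact integral_flux_le (by linarith) ha0.le (by linarith) (by linarith)
    _ ≤ c / Real.log 2 * growthBound a R + K * growthBound a R / (n - a) := by
        gcongr
        · rw [div_mul_eq_mul_div, le_div_iff₀ hlog2]
          exact mul_le_mul_of_nonneg_left hE hc_pos.le
        · exact hKbound R hR
    _ = _ := by
        rw [growthBound]
        ring
end

section
/- Let n ≥ 5, p = (n+2)/(n-2), and let φ_j : (0,∞) → ℝ be written as φ_j = U_r ψ_j where U_r = ∂U/∂r. Then the mode-1 quadratic form satisfies the identity Q₁(φ_j,φ_j) = ∫_0^{2R} |ψ_j'|² U_r² r^{n-1} dr ≥ 0, where Q₁(ψ,ψ) = ∫_0^{2R} ( |ψ'|² - pU^{p-1}ψ² + (n-1)ψ²/r² ) r^{n-1} dr. -/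
/-!
Differentiating the radial equation of the bubble shows that `U_r` solves the linearized
mode-1 equation `V'' + (n-1)/r V' - (n-1)/r² V + p U^{p-1} V = 0`. Substituting `φ = U_r ψ`
into the quadratic form then gives, pointwise,
`(φ'² - p U^{p-1} φ² + (n-1) φ²/r²) r^{n-1} = ψ'² U_r² r^{n-1} + (U_r U_r' ψ² r^{n-1})'`,
and the total derivative integrates to zero because `U_r(0) = 0` and `ψ(2R) = 0`.
-/

open Set Filter Topology MeasureTheory

lemma ground_state_substitution {N r v v' v'' s s' w : ℝ} (hr : 0 < r)
    (hode : v'' + (N - 1) / r * v' - (N - 1) / r ^ 2 * v + w * v = 0) :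
    ((v' * s + v * s') ^ 2 - w * (v * s) ^ 2 + (N - 1) * (v * s) ^ 2 / r ^ 2) * r ^ (N - 1) =
      s' ^ 2 * v ^ 2 * r ^ (N - 1) +
        (((v' * v' + v * v'') * s ^ 2 + v * v' * (2 * s * s')) * r ^ (N - 1) +
          v * v' * s ^ 2 * ((N - 1) * r ^ (N - 1 - 1))) := by
  rw [Real.rpow_sub_one hr.ne' (N - 1)]
  linear_combination (-(v * s ^ 2 * r ^ (N - 1))) * hode

theorem integral_radial_form_eq_of_ground_state {N b : ℝ} (hb : 0 < b)
    {V V' V'' ψ ψ' w : ℝ → ℝ}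
    (hV : ∀ r ∈ Ioo 0 b, HasDerivAt V (V' r) r) (hV' : ∀ r ∈ Ioo 0 b, HasDerivAt V' (V'' r) r)
    (hψ : ∀ r ∈ Ioo 0 b, HasDerivAt ψ (ψ' r) r)
    (hode : ∀ r ∈ Ioo 0 b,
      V'' r + (N - 1) / r * V' r - (N - 1) / r ^ 2 * V r + w r * V r = 0)
    (hzero : Tendsto (fun r => V r * V' r * ψ r ^ 2 * r ^ (N - 1)) (𝓝[>] 0) (𝓝 0))
    (hb_zero : Tendsto (fun r => V r * V' r * ψ r ^ 2 * r ^ (N - 1)) (𝓝[<] b) (𝓝 0))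
    (hQ : IntegrableOn (fun r => ((V' r * ψ r + V r * ψ' r) ^ 2 - w r * (V r * ψ r) ^ 2 +
      (N - 1) * (V r * ψ r) ^ 2 / r ^ 2) * r ^ (N - 1)) (Ioo 0 b))
    (hgrad : IntegrableOn (fun r => ψ' r ^ 2 * V r ^ 2 * r ^ (N - 1)) (Ioo 0 b)) :
    ∫ r in Ioo 0 b, ((V' r * ψ r + V r * ψ' r) ^ 2 - w r * (V r * ψ r) ^ 2 +
      (N - 1) * (V r * ψ r) ^ 2 / r ^ 2) * r ^ (N - 1) =
      ∫ r in Ioo 0 b, ψ' r ^ 2 * V r ^ 2 * r ^ (N - 1) := by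
  set G' : ℝ → ℝ := fun r => ((V' r * V' r + V r * V'' r) * ψ r ^ 2 +
    V r * V' r * (2 * ψ r * ψ' r)) * r ^ (N - 1) +
      V r * V' r * ψ r ^ 2 * ((N - 1) * r ^ (N - 1 - 1))
  have hsplit : ∀ r ∈ Ioo 0 b, ((V' r * ψ r + V r * ψ' r) ^ 2 - w r * (V r * ψ r) ^ 2 +
      (N - 1) * (V r * ψ r) ^ 2 / r ^ 2) * r ^ (N - 1) =
        ψ' r ^ 2 * V r ^ 2 * r ^ (N - 1) + G' r :=
    fun r hr => ground_state_substitution hr.1 (hode r hr)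
  have hG : ∀ r ∈ Ioo 0 b,
      HasDerivAt (fun r => V r * V' r * ψ r ^ 2 * r ^ (N - 1)) (G' r) r := fun r hr =>
    ((((hV r hr).fun_mul (hV' r hr)).fun_mul ((hψ r hr).fun_pow 2)).fun_mul
      (Real.hasDerivAt_rpow_const (Or.inl hr.1.ne'))).congr_deriv (by simp only [G']; ring)
  have hG'_int : IntegrableOn G' (Ioo 0 b) :=
    (hQ.sub hgrad).congr_fun (fun r hr => by rw [Pi.sub_apply, hsplit r hr]; ring) measurableSet_Ioo
  have hG'_zero : ∫ r in Ioo 0 b, G' r = 0 := by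
    rw [← integral_Ioc_eq_integral_Ioo, ← intervalIntegral.integral_of_le hb.le,
      intervalIntegral.integral_eq_sub_of_hasDerivAt_of_tendsto hb hG
        ((intervalIntegrable_iff_integrableOn_Ioo_of_le hb.le).2 hG'_int) hzero hb_zero, sub_zero]
  rw [setIntegral_congr_fun measurableSet_Ioo hsplit, integral_add hgrad hG'_int, hG'_zero,
    add_zero]

noncomputable def bubble (N r : ℝ) : ℝ :=
  (N * (N - 2)) ^ ((N - 2) / 4) * (1 + r ^ 2) ^ (-((N - 2) / 2))

noncomputable def bubbleMode (N r : ℝ) : ℝ := r * (1 + r ^ 2) ^ (-(N / 2))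

noncomputable def bubbleModeDeriv (N r : ℝ) : ℝ :=
  (1 + r ^ 2) ^ (-(N / 2)) - N * r ^ 2 * (1 + r ^ 2) ^ (-(N / 2) - 1)

noncomputable def bubbleModeDeriv2 (N r : ℝ) : ℝ :=
  -(3 * N) * r * (1 + r ^ 2) ^ (-(N / 2) - 1) + N * (N + 2) * r ^ 3 * (1 + r ^ 2) ^ (-(N / 2) - 2)

lemma hasDerivAt_one_add_sq_rpow (a r : ℝ) :
    HasDerivAt (fun x : ℝ => (1 + x ^ 2) ^ a) (2 * a * r * (1 + r ^ 2) ^ (a - 1)) r :=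
  (((hasDerivAt_pow 2 r).const_add 1).rpow_const (Or.inl (by positivity))).congr_deriv
    (by push_cast; ring)

lemma hasDerivAt_bubble (N r : ℝ) :
    HasDerivAt (bubble N) (-((N - 2) * (N * (N - 2)) ^ ((N - 2) / 4)) * bubbleMode N r) r :=
  ((hasDerivAt_one_add_sq_rpow _ r).const_mul _).congr_deriv (by
    rw [bubbleMode, show -((N - 2) / 2) - 1 = -(N / 2) by ring]; ring)

lemma hasDerivAt_bubbleMode (N r : ℝ) : HasDerivAt (bubbleMode N) (bubbleModeDeriv N r) r :=
  ((hasDerivAt_id r).fun_mul (hasDerivAt_one_add_sq_rpow _ r)).congr_deriv (by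
    rw [bubbleModeDeriv]; simp only [id]; ring)

lemma hasDerivAt_bubbleModeDeriv (N r : ℝ) :
    HasDerivAt (bubbleModeDeriv N) (bubbleModeDeriv2 N r) r :=
  ((hasDerivAt_one_add_sq_rpow _ r).fun_sub (((hasDerivAt_pow 2 r).const_mul N).fun_mul
    (hasDerivAt_one_add_sq_rpow _ r))).congr_deriv (by
      rw [bubbleModeDeriv2, show -(N / 2) - 1 - 1 = -(N / 2) - 2 by ring]; push_cast; ring)

lemma bubble_rpow_critical_sub_one {N : ℝ} (hN : 2 < N) (r : ℝ) :
    bubble N r ^ ((N + 2) / (N - 2) - 1) = N * (N - 2) / (1 + r ^ 2) ^ 2 := by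
  have hN2 : N - 2 ≠ 0 := by linarith
  have hX : 0 < 1 + r ^ 2 := by positivity
  have hc : 0 < N * (N - 2) := by nlinarith
  rw [bubble, show (N + 2) / (N - 2) - 1 = 4 / (N - 2) by field_simp; ring,
    Real.mul_rpow (by positivity) (by positivity), ← Real.rpow_mul hc.le, ← Real.rpow_mul hX.le,
    show (N - 2) / 4 * (4 / (N - 2)) = 1 by field_simp,
    show -((N - 2) / 2) * (4 / (N - 2)) = -(2 : ℕ) by field_simp; norm_num,
    Real.rpow_one, Real.rpow_neg hX.le, Real.rpow_natCast, div_eq_mul_inv]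

lemma bubbleMode_linearized {N r : ℝ} (hN : 2 < N) (hr : 0 < r) :
    bubbleModeDeriv2 N r + (N - 1) / r * bubbleModeDeriv N r - (N - 1) / r ^ 2 * bubbleMode N r +
      (N + 2) / (N - 2) * bubble N r ^ ((N + 2) / (N - 2) - 1) * bubbleMode N r = 0 := by
  have hX : 0 < 1 + r ^ 2 := by positivity
  have hpow : ∀ k : ℕ,
      (1 + r ^ 2) ^ (-(N / 2) - 2 + k) = (1 + r ^ 2) ^ (-(N / 2) - 2) * (1 + r ^ 2) ^ k :=
    fun k => by rw [Real.rpow_add hX, Real.rpow_natCast]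
  have h1 := hpow 1
  have h2 := hpow 2
  rw [show -(N / 2) - 2 + ((1 : ℕ) : ℝ) = -(N / 2) - 1 by push_cast; ring] at h1
  rw [show -(N / 2) - 2 + ((2 : ℕ) : ℝ) = -(N / 2) by push_cast; ring] at h2
  rw [bubble_rpow_critical_sub_one hN, bubbleModeDeriv2, bubbleModeDeriv, bubbleMode, h1, h2]
  have hN2 : N - 2 ≠ 0 := by linarith
  field_simp
  ring

theorem stmt16_general (n : ℕ) (hn : 5 ≤ n) (R : ℝ) (hR : 0 < R)
    (p : ℝ) (hp : p = ((n : ℝ) + 2) / ((n : ℝ) - 2))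
    (u : ℝ → ℝ)
    (hu : ∀ r : ℝ, u r = ((n : ℝ) * ((n : ℝ) - 2)) ^ (((n : ℝ) - 2) / 4) *
      (1 + r ^ 2) ^ (-(((n : ℝ) - 2) / 2)))
    (Ur : ℝ → ℝ) (hUr : Ur = deriv u)
    (ψ : ℝ → ℝ) (hψ : ContDiff ℝ 2 ψ)
    (φ : ℝ → ℝ) (hφ : ∀ r, φ r = Ur r * ψ r)
    (hψR : ψ (2 * R) = 0)
    -- all integrals converge
    (hint1 : IntegrableOn (fun r => (deriv φ r) ^ 2 * r ^ ((n : ℝ) - 1)) (Set.Ioo 0 (2 * R)))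
    (hint2 : IntegrableOn (fun r => (u r) ^ (p - 1) * (φ r) ^ 2 * r ^ ((n : ℝ) - 1))
      (Set.Ioo 0 (2 * R)))
    (hint3 : IntegrableOn (fun r => (φ r) ^ 2 / r ^ 2 * r ^ ((n : ℝ) - 1)) (Set.Ioo 0 (2 * R)))
    (hint4 : IntegrableOn (fun r => (deriv ψ r) ^ 2 * (Ur r) ^ 2 * r ^ ((n : ℝ) - 1))
      (Set.Ioo 0 (2 * R))) :
    (∫ r in Set.Ioo 0 (2 * R),
        ((deriv φ r) ^ 2 - p * (u r) ^ (p - 1) * (φ r) ^ 2 +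
          ((n : ℝ) - 1) * (φ r) ^ 2 / r ^ 2) * r ^ ((n : ℝ) - 1)) =
      (∫ r in Set.Ioo 0 (2 * R), (deriv ψ r) ^ 2 * (Ur r) ^ 2 * r ^ ((n : ℝ) - 1)) ∧
    0 ≤ ∫ r in Set.Ioo 0 (2 * R), (deriv ψ r) ^ 2 * (Ur r) ^ 2 * r ^ ((n : ℝ) - 1) := by
  have hN : (2 : ℝ) < n := by exact_mod_cast (by omega : 2 < n)
  set K := -(((n : ℝ) - 2) * ((n : ℝ) * ((n : ℝ) - 2)) ^ (((n : ℝ) - 2) / 4))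
  have hu : u = bubble n := funext hu
  have hUr : Ur = fun r => K * bubbleMode n r := by
    rw [hUr, hu]; exact funext fun r => (hasDerivAt_bubble n r).deriv
  have hV : ∀ r, HasDerivAt Ur (K * bubbleModeDeriv n r) r := fun r => by
    rw [hUr]; exact (hasDerivAt_bubbleMode n r).const_mul K
  have hV' : ∀ r, HasDerivAt (fun r => K * bubbleModeDeriv n r) (K * bubbleModeDeriv2 n r) r :=
    fun r => (hasDerivAt_bubbleModeDeriv n r).const_mul K
  have hψ' : ∀ r, HasDerivAt ψ (deriv ψ r) r :=
    fun r => ((hψ.differentiable (by norm_num)) r).hasDerivAt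
  have hφ' : ∀ r, deriv φ r = K * bubbleModeDeriv n r * ψ r + Ur r * deriv ψ r := fun r => by
    rw [funext hφ]; exact ((hV r).mul (hψ' r)).deriv
  have hboundary_cont :
      Continuous fun r => Ur r * (K * bubbleModeDeriv n r) * ψ r ^ 2 * r ^ ((n : ℝ) - 1) :=
    (((continuous_iff_continuousAt.2 fun r => (hV r).continuousAt).mul
      (continuous_iff_continuousAt.2 fun r => (hV' r).continuousAt)).mul
      ((hψ.continuous).pow 2)).mul (Real.continuous_rpow_const (by linarith))
  simp only [hφ', hφ] at hint1 hint2 hint3 ⊢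
  refine ⟨integral_radial_form_eq_of_ground_state (by positivity) (fun r _ => hV r)
    (fun r _ => hV' r) (fun r _ => hψ' r) (fun r hr => ?_) ?_ ?_ ?_ hint4, ?_⟩
  · simp only [hUr, hu, hp]
    linear_combination K * bubbleMode_linearized hN hr.1
  · simpa [hUr, bubbleMode] using (hboundary_cont.tendsto 0).mono_left nhdsWithin_le_nhds
  · simpa [hψR] using (hboundary_cont.tendsto (2 * R)).mono_left nhdsWithin_le_nhds
  · refine ((hint1.sub (hint2.const_mul p)).add (hint3.const_mul ((n : ℝ) - 1))).congr_fun
      (fun r _ => by simp only [Pi.add_apply, Pi.sub_apply]; ring) measurableSet_Ioo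
  · exact setIntegral_nonneg measurableSet_Ioo fun r hr =>
      mul_nonneg (by positivity) (Real.rpow_nonneg hr.1.le _)

theorem stmt16 (n : ℕ) (hn : 5 ≤ n) (R : ℝ) (hR : 0 < R)
    (p : ℝ) (hp : p = ((n : ℝ) + 2) / ((n : ℝ) - 2))
    (u : ℝ → ℝ)
    (hu : ∀ r : ℝ, u r = ((n : ℝ) * ((n : ℝ) - 2)) ^ (((n : ℝ) - 2) / 4) *
      (1 + r ^ 2) ^ (-(((n : ℝ) - 2) / 2)))
    (Ur : ℝ → ℝ) (hUr : Ur = deriv u)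
    (ψ : ℝ → ℝ) (hψ : ContDiff ℝ 2 ψ)
    (φ : ℝ → ℝ) (hφ : ∀ r, φ r = Ur r * ψ r)
    (hψR : ψ (2 * R) = 0)
    -- regularity at the origin: the boundary term vanishes
    (hbdry : Filter.Tendsto (fun r => (Ur r) ^ 2 * ψ r * deriv ψ r * r ^ ((n : ℝ) - 1))
      (nhdsWithin 0 (Set.Ioi 0)) (nhds 0))
    -- all integrals converge
    (hint1 : IntegrableOn (fun r => (deriv φ r) ^ 2 * r ^ ((n : ℝ) - 1)) (Set.Ioo 0 (2 * R)))
    (hint2 : IntegrableOn (fun r => (u r) ^ (p - 1) * (φ r) ^ 2 * r ^ ((n : ℝ) - 1))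
      (Set.Ioo 0 (2 * R)))
    (hint3 : IntegrableOn (fun r => (φ r) ^ 2 / r ^ 2 * r ^ ((n : ℝ) - 1)) (Set.Ioo 0 (2 * R)))
    (hint4 : IntegrableOn (fun r => (deriv ψ r) ^ 2 * (Ur r) ^ 2 * r ^ ((n : ℝ) - 1))
      (Set.Ioo 0 (2 * R))) :
    (∫ r in Set.Ioo 0 (2 * R),
        ((deriv φ r) ^ 2 - p * (u r) ^ (p - 1) * (φ r) ^ 2 +
          ((n : ℝ) - 1) * (φ r) ^ 2 / r ^ 2) * r ^ ((n : ℝ) - 1)) =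
      (∫ r in Set.Ioo 0 (2 * R), (deriv ψ r) ^ 2 * (Ur r) ^ 2 * r ^ ((n : ℝ) - 1)) ∧
    0 ≤ ∫ r in Set.Ioo 0 (2 * R), (deriv ψ r) ^ 2 * (Ur r) ^ 2 * r ^ ((n : ℝ) - 1) :=
  stmt16_general n hn R hR p hp u hu Ur hUr ψ hψ φ hφ hψR hint1 hint2 hint3 hint4
end
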